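/- Let A and B be bounded linear operators on a complex Hilbert space H, let 0 < t < 1, and set r = min{t, 1−t}. Then ω(AB)^{1/2} ≤ (1/2)‖A + B*‖ + (ω([[O, A],[B, O]]) − ω([[O, (1−t)A + tB*],[(1−t)B + tA*, O]]))/(2r). -/

import Mathlib

open ContinuousLinearMap

/-- The numerical radius of a bounded operator on a complex inner product space:
`ω(T) = sup { |⟨Tx, x⟩| : ‖x‖ = 1 }`. -/
noncomputable def numRadius {E : Type*} [NormedAddCommGroup E] [InnerProductSpace ℂ E]
    (T : E →L[ℂ] E) : ℝ :=
  ⨆ x : { x : E // ‖x‖ = 1 }, ‖(inner ℂ (T x) (x : E) : ℂ)‖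

/-- The block operator `[[O, A], [B, O]]` on the Hilbert space direct sum `H ⊕₂ H`,
sending `(x, y)` to `(A y, B x)`. -/
noncomputable def blockOp {H : Type*} [NormedAddCommGroup H] [InnerProductSpace ℂ H]
    (A B : H →L[ℂ] H) : WithLp 2 (H × H) →L[ℂ] WithLp 2 (H × H) :=
  ((WithLp.prodContinuousLinearEquiv 2 ℂ H H).symm : (H × H) →L[ℂ] WithLp 2 (H × H)) ∘L
    ((A ∘L ContinuousLinearMap.snd ℂ H H).prod (B ∘L ContinuousLinearMap.fst ℂ H H)) ∘L
    ((WithLp.prodContinuousLinearEquiv 2 ℂ H H) : WithLp 2 (H × H) →L[ℂ] H × H)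

/-!
With `T = [[O, A], [B, O]]` and `X = ⟨T z, z⟩`, the operator `T_t` with entries
`(1 - t) A + t B*` and `(1 - t) B + t A*` has quadratic form `(1 - t) X + t X̄`, which equals
`(1 - 2r) X + 2r Re X` or its conjugate. Since `Re X = Re ⟨(A + B*) z₂, z₁⟩` is at most
`‖A + B*‖ / 2` on unit vectors, `ω(T_t) ≤ (1 - 2r) ω(T) + r ‖A + B*‖`, which rearranges to
`ω(T) ≤ ‖A + B*‖ / 2 + (ω(T) - ω(T_t)) / (2r)`. Finally `ω(AB) ≤ ω(T)²`.
-/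

open ComplexConjugate
open scoped InnerProductSpace

theorem Complex.exists_norm_eq_one_conj_mul_eq (c : ℂ) :
    ∃ μ : ℂ, ‖μ‖ = 1 ∧ conj μ * c = μ * ‖c‖ := by
  refine ⟨Complex.exp (↑(c.arg / 2) * Complex.I), Complex.norm_exp_ofReal_mul_I _, ?_⟩
  have hc := Complex.norm_mul_exp_arg_mul_I c
  set θ := c.arg
  nth_rw 1 [← hc]
  rw [← Complex.exp_conj, mul_left_comm, ← Complex.exp_add, mul_comm]
  congr 2
  simp only [map_mul, Complex.conj_ofReal, Complex.conj_I]
  push_cast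
  ring

theorem Complex.norm_mul_add_mul_conj_le (c : ℂ) {a b : ℝ} (hb : 0 ≤ b) (hba : b ≤ a) :
    ‖(a : ℂ) * c + (b : ℂ) * conj c‖ ≤ (a - b) * ‖c‖ + 2 * b * |c.re| := by
  have hsplit :
      (a : ℂ) * c + (b : ℂ) * conj c = ((a - b : ℝ) : ℂ) * c + ((2 * b * c.re : ℝ) : ℂ) := by
    have hre : ((c.re : ℝ) : ℂ) = (c + conj c) / 2 := by
      rw [Complex.add_conj]; push_cast; ring
    push_cast
    rw [hre]
    ring
  calc ‖(a : ℂ) * c + (b : ℂ) * conj c‖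
      ≤ ‖((a - b : ℝ) : ℂ) * c‖ + ‖((2 * b * c.re : ℝ) : ℂ)‖ := hsplit ▸ norm_add_le _ _
    _ = (a - b) * ‖c‖ + 2 * b * |c.re| := by
      rw [norm_mul, Complex.norm_real, Complex.norm_real, Real.norm_eq_abs, Real.norm_eq_abs,
        abs_of_nonneg (sub_nonneg.2 hba), abs_mul, abs_of_nonneg (by positivity : 0 ≤ 2 * b)]

theorem Complex.norm_convex_comb_conj_le (c : ℂ) {t : ℝ} (ht0 : 0 ≤ t) (ht1 : t ≤ 1) :
    ‖((1 - t : ℝ) : ℂ) * c + (t : ℂ) * conj c‖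
      ≤ (1 - 2 * min t (1 - t)) * ‖c‖ + 2 * min t (1 - t) * |c.re| := by
  rcases le_total t (1 - t) with h | h
  · rw [min_eq_left h]
    convert c.norm_mul_add_mul_conj_le ht0 h using 2
    ring
  · rw [min_eq_right h]
    have := (conj c).norm_mul_add_mul_conj_le (sub_nonneg.2 ht1) h
    rw [Complex.conj_conj, Complex.norm_conj, Complex.conj_re, add_comm] at this
    linarith

section NumRadius

variable {E : Type*} [NormedAddCommGroup E] [InnerProductSpace ℂ E]

theorem numRadius_nonneg (T : E →L[ℂ] E) : 0 ≤ numRadius T :=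
  Real.iSup_nonneg fun _ => norm_nonneg _

theorem numRadius_le {T : E →L[ℂ] E} {M : ℝ} (hM : 0 ≤ M)
    (h : ∀ x : E, ‖x‖ = 1 → ‖⟪T x, x⟫_ℂ‖ ≤ M) : numRadius T ≤ M :=
  Real.iSup_le (fun x => h x x.2) hM

theorem norm_inner_le_numRadius (T : E →L[ℂ] E) {x : E} (hx : ‖x‖ = 1) :
    ‖⟪T x, x⟫_ℂ‖ ≤ numRadius T := by
  refine le_ciSup (f := fun y : {x : E // ‖x‖ = 1} => ‖⟪T y, y⟫_ℂ‖) ⟨‖T‖, ?_⟩ ⟨x, hx⟩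
  rintro _ ⟨y, rfl⟩
  calc ‖⟪T y, y⟫_ℂ‖ ≤ ‖T y‖ * ‖(y : E)‖ := norm_inner_le_norm _ _
    _ ≤ ‖T‖ := by simpa [y.2] using T.le_opNorm y

theorem norm_inner_le_numRadius_mul_sq (T : E →L[ℂ] E) (x : E) :
    ‖⟪T x, x⟫_ℂ‖ ≤ numRadius T * ‖x‖ ^ 2 := by
  rcases eq_or_ne x 0 with rfl | hx
  · simp
  have hu : ‖(‖x‖⁻¹ : ℂ) • x‖ = 1 := by
    rw [norm_smul, norm_inv, Complex.norm_real, norm_norm, inv_mul_cancel₀ (norm_ne_zero_iff.2 hx)]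
  have := norm_inner_le_numRadius T hu
  rw [map_smul, inner_smul_left, inner_smul_right, norm_mul, norm_mul, map_inv₀, norm_inv, norm_inv,
    Complex.norm_conj, Complex.norm_real, norm_norm, ← mul_assoc, ← mul_inv, ← sq,
    inv_mul_le_iff₀ (by positivity)] at this
  linarith

end NumRadius

section BlockOp

variable {H : Type*} [NormedAddCommGroup H] [InnerProductSpace ℂ H]

theorem inner_blockOp_self (A B : H →L[ℂ] H) (z : WithLp 2 (H × H)) :
    ⟪blockOp A B z, z⟫_ℂ = ⟪A z.snd, z.fst⟫_ℂ + ⟪B z.fst, z.snd⟫_ℂ := by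
  rw [WithLp.prod_inner_apply]; rfl

theorem norm_inner_add_inner_le_numRadius_blockOp (A B : H →L[ℂ] H) (u v : H) :
    ‖⟪A v, u⟫_ℂ + ⟪B u, v⟫_ℂ‖ ≤ numRadius (blockOp A B) * (‖u‖ ^ 2 + ‖v‖ ^ 2) := by
  have := norm_inner_le_numRadius_mul_sq (blockOp A B) (WithLp.toLp 2 (u, v))
  rwa [inner_blockOp_self, WithLp.prod_norm_sq_eq_of_L2] at this

/-- Testing `[[O, A], [B, O]]` on `(‖Bx‖ x, μ Bx)`, with the phase `μ` aligning both terms,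
gives `‖Bx‖ (|⟨ABx, x⟩| + ‖Bx‖²) ≤ 2 ω ‖Bx‖²`, and AM-GM finishes. -/
theorem numRadius_mul_le_sq_numRadius_blockOp (A B : H →L[ℂ] H) :
    numRadius (A * B) ≤ numRadius (blockOp A B) ^ 2 := by
  set w := numRadius (blockOp A B)
  refine numRadius_le (sq_nonneg w) fun x hx => ?_
  set c := ⟪(A * B) x, x⟫_ℂ
  set b := ‖B x‖
  rcases (norm_nonneg (B x)).eq_or_lt with hb | hb
  · simp only [c, mul_apply_eq_comp, norm_eq_zero.1 hb.symm, map_zero,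
      inner_zero_left, norm_zero]
    positivity
  obtain ⟨μ, hμ, hμc⟩ := c.exists_norm_eq_one_conj_mul_eq
  have hinner : ⟪A (μ • B x), (b : ℂ) • x⟫_ℂ + ⟪B ((b : ℂ) • x), μ • B x⟫_ℂ
      = ((b * (‖c‖ + b ^ 2) : ℝ) : ℂ) * μ := by
    simp only [map_smul, inner_smul_left, inner_smul_right, Complex.conj_ofReal,
      inner_self_eq_norm_sq_to_K]
    change (b : ℂ) * (conj μ * c) + μ * (b * b ^ 2) = _
    push_cast
    rw [hμc]; ring
  have key := norm_inner_add_inner_le_numRadius_blockOp A B ((b : ℂ) • x) (μ • B x)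
  rw [hinner, norm_mul, norm_smul, norm_smul, hμ, hx, Complex.norm_real,
    Real.norm_of_nonneg (by positivity), Complex.norm_real, Real.norm_of_nonneg hb.le] at key
  have hcb : ‖c‖ + b ^ 2 ≤ 2 * w * b :=
    le_of_mul_le_mul_left (by linarith) hb
  nlinarith [sq_nonneg (w - b)]

theorem abs_re_inner_blockOp_le [CompleteSpace H] (A B : H →L[ℂ] H) (z : WithLp 2 (H × H)) :
    |(⟪blockOp A B z, z⟫_ℂ).re| ≤ ‖A + adjoint B‖ / 2 * ‖z‖ ^ 2 := by
  have hre : (⟪blockOp A B z, z⟫_ℂ).re = (⟪(A + adjoint B) z.snd, z.fst⟫_ℂ).re := by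
    rw [inner_blockOp_self, add_apply, inner_add_left, Complex.add_re, Complex.add_re,
      adjoint_inner_left, ← inner_conj_symm z.snd, Complex.conj_re]
  have hnorm : ‖⟪(A + adjoint B) z.snd, z.fst⟫_ℂ‖ ≤ ‖A + adjoint B‖ * ‖z.snd‖ * ‖z.fst‖ :=
    (norm_inner_le_norm _ _).trans (by gcongr; exact le_opNorm _ _)
  rw [hre, WithLp.prod_norm_sq_eq_of_L2]
  nlinarith [Complex.abs_re_le_norm ⟪(A + adjoint B) z.snd, z.fst⟫_ℂ, norm_nonneg (A + adjoint B),
    sq_nonneg (‖z.fst‖ - ‖z.snd‖)]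

theorem inner_blockOp_smul_add_smul_adjoint_self [CompleteSpace H] (A B : H →L[ℂ] H) (a b : ℝ)
    (z : WithLp 2 (H × H)) :
    ⟪blockOp ((a : ℂ) • A + (b : ℂ) • adjoint B) ((a : ℂ) • B + (b : ℂ) • adjoint A) z, z⟫_ℂ
      = a * ⟪blockOp A B z, z⟫_ℂ + b * conj ⟪blockOp A B z, z⟫_ℂ := by
  simp only [inner_blockOp_self, add_apply, smul_apply, inner_add_left, inner_smul_left,
    Complex.conj_ofReal, adjoint_inner_left, map_add, inner_conj_symm]
  ring

theorem numRadius_blockOp_convex_le [CompleteSpace H] (A B : H →L[ℂ] H) {t : ℝ} (ht0 : 0 ≤ t)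
    (ht1 : t ≤ 1) :
    numRadius (blockOp (((1 - t : ℝ) : ℂ) • A + ((t : ℝ) : ℂ) • adjoint B)
        (((1 - t : ℝ) : ℂ) • B + ((t : ℝ) : ℂ) • adjoint A))
      ≤ (1 - 2 * min t (1 - t)) * numRadius (blockOp A B) + min t (1 - t) * ‖A + adjoint B‖ := by
  have hr0 : 0 ≤ min t (1 - t) := le_min ht0 (by linarith)
  have hr1 : 0 ≤ 1 - 2 * min t (1 - t) := by
    linarith [min_le_left t (1 - t), min_le_right t (1 - t)]
  refine numRadius_le (add_nonneg (mul_nonneg hr1 (numRadius_nonneg _))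
    (mul_nonneg hr0 (norm_nonneg _))) fun z hz => ?_
  have hw := norm_inner_le_numRadius (blockOp A B) hz
  have hre := abs_re_inner_blockOp_le A B z
  rw [hz, one_pow, mul_one] at hre
  rw [inner_blockOp_smul_add_smul_adjoint_self]
  refine (Complex.norm_convex_comb_conj_le _ ht0 ht1).trans ?_
  nlinarith

end BlockOp

/-- For `0 < t < 1` and `r = min{t, 1−t}`:
`ω(AB)^{1/2} ≤ (1/2)‖A+B*‖ + (ω([[O,A],[B,O]]) − ω([[O,(1−t)A+tB*],[(1−t)B+tA*,O]]))/(2r)`. -/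
theorem stmt_16 {H : Type*} [NormedAddCommGroup H] [InnerProductSpace ℂ H] [CompleteSpace H]
    (A B : H →L[ℂ] H) (t r : ℝ) (ht0 : 0 < t) (ht1 : t < 1) (hr : r = min t (1 - t)) :
    Real.sqrt (numRadius (A * B)) ≤
      (1 / 2 : ℝ) * ‖A + adjoint B‖ +
        (numRadius (blockOp A B) -
            numRadius
              (blockOp (((1 - t : ℝ) : ℂ) • A + ((t : ℝ) : ℂ) • adjoint B)
                (((1 - t : ℝ) : ℂ) • B + ((t : ℝ) : ℂ) • adjoint A))) / (2 * r) := by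
  have hconvex := numRadius_blockOp_convex_le A B ht0.le ht1.le
  rw [← hr] at hconvex
  have hr0 : 0 < r := hr ▸ lt_min ht0 (by linarith)
  calc Real.sqrt (numRadius (A * B)) ≤ numRadius (blockOp A B) :=
        (Real.sqrt_le_left (numRadius_nonneg _)).2 (numRadius_mul_le_sq_numRadius_blockOp A B)
    _ = 1 / 2 * ‖A + adjoint B‖
          + (2 * r * numRadius (blockOp A B) - r * ‖A + adjoint B‖) / (2 * r) := by
      field_simp; ring
    _ ≤ _ := by gcongr _ + ?_ / _; linarith
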